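/- Let L be a number field and n ≥ 1 an integer. For any algebraic integers β₁, …, βₙ ∈ O_L such that β₁ + ⋯ + βₙ ∈ 2O_L, the following two inequalities hold: (i) Σ_σ Σ_{k=1}^n Re σ(β_k) ≤ Σ_σ Σ_{k=1}^n |σ(β_k)|²; (ii) Σ_σ ( |σ(β₁) − 1|² + Σ_{k=2}^n |σ(β_k)|² ) ≥ [L:ℚ], where σ ranges over all field embeddings of L into ℂ. -/

import Mathlib

open NumberField

/-! For a nonzero algebraic integer `x`, AM–GM together with `|N(x)| ≥ 1` gives
`Σ_σ |σ x|² ≥ [L:ℚ]`. Applied to `2β - 1`, which is nonzero because `2` is not a unit of `𝓞 L`,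
this expands to `Σ_σ Re σ β ≤ Σ_σ |σ β|²`, which gives (i) summand by summand. For (ii), the tuple
`(β₁ - 1, β₂, …, βₙ)` is nonzero, as otherwise `Σ βₖ = 1 ∉ 2𝓞_L`, so one of its entries alone
contributes at least `[L:ℚ]`. -/

theorem card_le_sum_of_one_le_prod {ι : Type*} [Fintype ι] {z : ι → ℝ}
    (hz : ∀ i, 0 ≤ z i) (hprod : 1 ≤ ∏ i, z i) : (Fintype.card ι : ℝ) ≤ ∑ i, z i := by
  rcases isEmpty_or_nonempty ι with _ | _
  · simp
  have hcard : (0 : ℝ) < Fintype.card ι := by exact_mod_cast Fintype.card_pos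
  have hAMGM := Real.geom_mean_le_arith_mean Finset.univ (fun _ => 1) z
    (fun _ _ => zero_le_one) (by simpa using hcard) (fun i _ => hz i)
  simp only [Real.rpow_one, Finset.sum_const, Finset.card_univ, nsmul_eq_mul, mul_one,
    one_mul] at hAMGM
  have hgeom : 1 ≤ (∏ i, z i) ^ (Fintype.card ι : ℝ)⁻¹ := Real.one_le_rpow hprod (by positivity)
  rw [← one_le_div₀ hcard]
  exact hgeom.trans hAMGM

theorem Complex.sq_norm_two_mul_sub_one (z : ℂ) :
    ‖2 * z - 1‖ ^ 2 = 4 * ‖z‖ ^ 2 - 4 * z.re + 1 := by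
  simp only [Complex.sq_norm, Complex.normSq_apply, Complex.sub_re, Complex.sub_im,
    Complex.mul_re, Complex.mul_im, Complex.one_re, Complex.one_im, Complex.re_ofNat,
    Complex.im_ofNat]
  ring

namespace NumberField

variable {K : Type*} [Field K] [NumberField K]

theorem prod_norm_embeddings_eq_abs_norm (x : K) :
    ∏ σ : K →+* ℂ, ‖σ x‖ = |(Algebra.norm ℚ x : ℝ)| := by
  rw [Fintype.prod_equiv (RingHom.equivRatAlgHom K ℂ) (fun φ => ‖φ x‖) (fun f => ‖f x‖)
    fun _ => by simp [RingHom.equivRatAlgHom_apply], ← norm_prod,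
    ← Algebra.norm_eq_prod_embeddings, eq_ratCast, Complex.norm_ratCast]

theorem RingOfIntegers.one_le_prod_norm_embeddings {x : 𝓞 K} (hx : x ≠ 0) :
    1 ≤ ∏ σ : K →+* ℂ, ‖σ x‖ := by
  rw [prod_norm_embeddings_eq_abs_norm, ← Algebra.coe_norm_int, Rat.cast_intCast,
    ← Int.cast_abs, ← Int.cast_one, Int.cast_le]
  exact Int.one_le_abs (Algebra.norm_ne_zero_iff.mpr hx)

theorem RingOfIntegers.finrank_le_sum_sq_norm_embeddings {x : 𝓞 K} (hx : x ≠ 0) :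
    (Module.finrank ℚ K : ℝ) ≤ ∑ σ : K →+* ℂ, ‖σ x‖ ^ 2 := by
  rw [← Embeddings.card K ℂ]
  refine card_le_sum_of_one_le_prod (fun _ => sq_nonneg _) ?_
  rw [Finset.prod_pow]
  exact one_le_pow₀ (one_le_prod_norm_embeddings hx)

theorem RingOfIntegers.not_isUnit_two : ¬IsUnit (2 : 𝓞 K) := by
  intro h2
  have hnorm := h2.map (Algebra.norm ℤ)
  rw [← map_ofNat (algebraMap ℤ (𝓞 K)) 2, Algebra.norm_algebraMap,
    isUnit_pow_iff (RingOfIntegers.rank K ▸ Module.finrank_pos.ne')] at hnorm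
  exact absurd (Int.isUnit_iff.mp hnorm) (by decide)

theorem RingOfIntegers.two_mul_ne_one (x : 𝓞 K) : 2 * x ≠ 1 :=
  fun h => not_isUnit_two (IsUnit.of_mul_eq_one _ h)

theorem RingOfIntegers.sum_re_embeddings_le_sum_sq_norm (x : 𝓞 K) :
    ∑ σ : K →+* ℂ, (σ x).re ≤ ∑ σ : K →+* ℂ, ‖σ x‖ ^ 2 := by
  have hfinrank := finrank_le_sum_sq_norm_embeddings (sub_ne_zero.mpr (two_mul_ne_one x))
  have hexpand : ∑ σ : K →+* ℂ, ‖σ ((2 * x - 1 : 𝓞 K) : K)‖ ^ 2 =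
      4 * ∑ σ : K →+* ℂ, ‖σ x‖ ^ 2 - 4 * ∑ σ : K →+* ℂ, (σ x).re + Module.finrank ℚ K := by
    push_cast
    simp only [map_sub, map_mul, map_ofNat, map_one, Complex.sq_norm_two_mul_sub_one,
      Finset.sum_add_distrib, Finset.sum_sub_distrib, ← Finset.mul_sum, Finset.sum_const,
      Finset.card_univ, Embeddings.card, nsmul_one]
  linarith

theorem RingOfIntegers.finrank_le_sum_sum_sq_norm_embeddings {ι : Type*} [Fintype ι]
    {x : ι → 𝓞 K} (hx : x ≠ 0) :
    (Module.finrank ℚ K : ℝ) ≤ ∑ σ : K →+* ℂ, ∑ i, ‖σ (x i)‖ ^ 2 := by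
  obtain ⟨i, hi⟩ := Function.ne_iff.mp hx
  calc (Module.finrank ℚ K : ℝ) ≤ ∑ σ : K →+* ℂ, ‖σ (x i)‖ ^ 2 :=
        finrank_le_sum_sq_norm_embeddings hi
    _ ≤ ∑ σ : K →+* ℂ, ∑ i, ‖σ (x i)‖ ^ 2 := Finset.sum_le_sum fun σ _ =>
        Finset.single_le_sum (f := fun i => ‖σ (x i)‖ ^ 2) (fun _ _ => sq_nonneg _)
          (Finset.mem_univ i)

end NumberField

/-- Lemma 5.14 (the condition P(L/ℚ, Dₙ) at the vertices of the Voronoi cell of Dₙ):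
for algebraic integers `β₁, …, βₙ` whose sum lies in `2𝓞_L`:
(i) `Σ_σ Σ_k Re σ(β_k) ≤ Σ_σ Σ_k |σ(β_k)|²`;
(ii) `Σ_σ (|σ(β₁) − 1|² + Σ_{k≥2} |σ(β_k)|²) ≥ [L:ℚ]`. -/
theorem statement5 (L : Type*) [Field L] [NumberField L] (n : ℕ) (hn : 1 ≤ n)
    (β : Fin n → 𝓞 L) (hsum : ∃ γ : 𝓞 L, ∑ k, β k = 2 * γ) :
    ((∑ σ : L →+* ℂ, ∑ k, (σ (β k : L)).re) ≤
        ∑ σ : L →+* ℂ, ∑ k, ‖σ (β k : L)‖ ^ 2) ∧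
      ((Module.finrank ℚ L : ℝ) ≤
        ∑ σ : L →+* ℂ,
          (‖σ (β ⟨0, hn⟩ : L) - 1‖ ^ 2 +
            ∑ k ∈ Finset.univ.filter (fun k : Fin n => k ≠ ⟨0, hn⟩),
              ‖σ (β k : L)‖ ^ 2)) := by
  refine ⟨?_, ?_⟩
  · rw [Finset.sum_comm]
    exact (Finset.sum_le_sum fun k _ =>
      RingOfIntegers.sum_re_embeddings_le_sum_sq_norm (β k)).trans_eq Finset.sum_comm
  · obtain ⟨γ, hγ⟩ := hsum
    set k₀ : Fin n := ⟨0, hn⟩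
    have hshift : Function.update β k₀ (β k₀ - 1) ≠ 0 := by
      rw [Ne, Function.update_eq_iff]
      rintro ⟨hk₀, hrest⟩
      refine RingOfIntegers.two_mul_ne_one γ (hγ ▸ ?_)
      rw [Finset.sum_eq_single k₀ (fun k _ hk => hrest k hk) (by simp)]
      exact sub_eq_zero.mp hk₀
    refine (RingOfIntegers.finrank_le_sum_sum_sq_norm_embeddings hshift).trans_eq
      (Finset.sum_congr rfl fun σ _ => ?_)
    rw [Finset.filter_ne', ← Finset.add_sum_erase _ _ (Finset.mem_univ k₀)]
    congr 1
    · simp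
    · exact Finset.sum_congr rfl fun k hk => by
        rw [Function.update_of_ne (Finset.ne_of_mem_erase hk)]
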